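/- Let F1, F2 be forests on I with disjoint supports. Then there is exactly one pair (F, V1 ⊔ V2 = V(F)) with F1 ∈ γ(F,V1) and F2 ∈ γ(F,V2): namely F is the unique forest with Supp(F) = Supp(F1) ⊔ Supp(F2) that coincides with F1 on Supp(F1) and with F2 on Supp(F2). -/

import Mathlib

open Finset

/-- A forest of leaf-labeled rooted binary trees on a ground set of labels,
encoded by the family of "clades": for each inner vertex, the set of its
ancestor leaves. Laminarity plus the binary splitting condition exactly
characterize such forests, and inner vertices correspond bijectively to clades. -/
structure Forest (I : Type*) [DecidableEq I] where
  ground : Finset I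
  clades : Finset (Finset I)
  subset_ground : ∀ C ∈ clades, C ⊆ ground
  laminar : ∀ C ∈ clades, ∀ D ∈ clades, C ⊆ D ∨ D ⊆ C ∨ Disjoint C D
  binary : ∀ C ∈ clades, ∃ A B : Finset I,
      (A ∈ clades ∨ ∃ x, A = {x}) ∧ (B ∈ clades ∨ ∃ x, B = {x}) ∧
      Disjoint A B ∧ A ∪ B = C ∧ A ≠ C ∧ B ≠ C

namespace Forest

variable {I : Type*} [DecidableEq I]

/-- The partial order on forests of the paper: `F' ≤ F` iff there is an injection
of the inner vertices of `F'` into those of `F` which enlarges ancestor-leaf sets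
and preserves the ancestor relation among inner vertices. -/
def Le (F' F : Forest I) : Prop :=
  F'.ground = F.ground ∧ ∃ φ : Finset I → Finset I,
    Set.InjOn φ (F'.clades : Set (Finset I)) ∧
    (∀ C ∈ F'.clades, φ C ∈ F.clades) ∧
    (∀ C ∈ F'.clades, C ⊆ φ C) ∧
    (∀ C ∈ F'.clades, ∀ D ∈ F'.clades, C ⊆ D → φ C ⊆ φ D)

/-- `γ(F,V)`: the set of forests `F' ≤ F` whose inner vertices are identified,
via the order-defining injection, with the subset `V` of inner vertices of `F`. -/
def gamma (F : Forest I) (V : Finset (Finset I)) : Set (Forest I) :=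
  {F' | F'.ground = F.ground ∧ ∃ φ : Finset I → Finset I,
    Set.InjOn φ (F'.clades : Set (Finset I)) ∧
    (∀ C ∈ F'.clades, φ C ∈ F.clades) ∧
    (∀ C ∈ F'.clades, C ⊆ φ C) ∧
    (∀ C ∈ F'.clades, ∀ D ∈ F'.clades, C ⊆ D → φ C ⊆ φ D) ∧
    F'.clades.image φ = V}

/-- A forest consisting of a single tree. -/
def IsTree (F : Forest I) : Prop :=
  F.ground.Nonempty ∧ (F.ground ∈ F.clades ∨ F.ground.card = 1)

/-- The support: leaves whose path to the root contains at least one inner vertex. -/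
def supp (F : Forest I) : Finset I := F.clades.sup id

/-- The leaf-label sets of the trees of the forest: maximal clades together with
the singletons of labels not lying in any clade. -/
def rootBlocks (F : Forest I) : Finset (Finset I) :=
  F.clades.filter (fun C => ∀ D ∈ F.clades, C ⊆ D → C = D) ∪
  (F.ground.filter (fun x => ∀ C ∈ F.clades, x ∉ C)).image
    (fun x => ({x} : Finset I))

end Forest

/-!
The forest `G` whose clades are those of `F1` together with those of `F2` gives a pair. Conversely,
the witnesses of `F1 ∈ γ(F,V1)` and `F2 ∈ γ(F,V2)` glue to an inclusion-preserving bijection `φ`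
from the clades of `G` onto those of `F` with `C ⊆ φ C`. Such a `φ` is the identity: a forest has
`#Supp - #roots` inner vertices, and `φ` keeps the number of inner vertices, cannot shrink the
support and cannot create roots; so supports and root counts agree, every root clade is sent to a
root clade of the same size, hence is fixed, and one recurses on the forests with roots removed.
-/

namespace Forest

variable {I : Type*} [DecidableEq I]

/-- Leaves are represented by singletons, inner vertices by their clades. -/
def IsVertex (F : Forest I) (Z : Finset I) : Prop :=
  Z ∈ F.clades ∨ ∃ x, Z = {x}

def maxClades (F : Forest I) : Finset (Finset I) :=
  {C ∈ F.clades | ∀ D ∈ F.clades, C ⊆ D → C = D}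

variable {F : Forest I} {C E X Y Z : Finset I}

theorem two_le_card (hC : C ∈ F.clades) : 2 ≤ #C := by
  obtain ⟨X, Y, -, -, hXY, rfl, hXC, hYC⟩ := F.binary C hC
  have hXne : X.Nonempty := nonempty_iff_ne_empty.2 fun h => hYC (by simp [h])
  have hYne : Y.Nonempty := nonempty_iff_ne_empty.2 fun h => hXC (by simp [h])
  rw [card_union_of_disjoint hXY]
  have := hXne.card_pos
  have := hYne.card_pos
  omega

theorem nonempty_of_mem_clades (hC : C ∈ F.clades) : C.Nonempty :=
  card_pos.1 (by have := two_le_card hC; omega)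

theorem subset_supp (hC : C ∈ F.clades) : C ⊆ F.supp :=
  le_sup (f := id) hC

theorem IsVertex.subset_or_disjoint (hZ : F.IsVertex Z) (hE : E ∈ F.clades) :
    Z ⊆ E ∨ E ⊆ Z ∨ Disjoint Z E := by
  rcases hZ with hZ | ⟨x, rfl⟩
  · exact F.laminar Z hZ E hE
  · by_cases hx : x ∈ E
    · exact Or.inl (singleton_subset_iff.2 hx)
    · exact Or.inr (Or.inr (disjoint_singleton_left.2 hx))

theorem subset_or_subset_of_ssubset_union (hX : F.IsVertex X) (hY : F.IsVertex Y)
    (hE : E ∈ F.clades) (hEXY : E ⊂ X ∪ Y) : E ⊆ X ∨ E ⊆ Y := by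
  rcases hX.subset_or_disjoint hE with hXE | hEX | hXE
  · rcases hY.subset_or_disjoint hE with hYE | hEY | hYE
    · exact absurd (union_subset hXE hYE) hEXY.not_subset
    · exact Or.inr hEY
    · exact Or.inl (Disjoint.left_le_of_le_sup_right hEXY.subset hYE.symm)
  · exact Or.inl hEX
  · exact Or.inr (Disjoint.left_le_of_le_sup_left hEXY.subset hXE.symm)

/-- A tree with `n` leaves has `n - 1` inner vertices. -/
theorem card_clades_subset_add_one (hZ : F.IsVertex Z) :
    #{C ∈ F.clades | C ⊆ Z} + 1 = #Z := by
  induction hn : #Z using Nat.strong_induction_on generalizing Z with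
  | _ n ih =>
  rcases hZ with hZ | ⟨x, rfl⟩
  · obtain ⟨X, Y, hX, hY, hXY, rfl, hXZ, hYZ⟩ := F.binary Z hZ
    have hXlt : #X < n := hn ▸ card_lt_card (ssubset_of_subset_of_ne subset_union_left hXZ)
    have hYlt : #Y < n := hn ▸ card_lt_card (ssubset_of_subset_of_ne subset_union_right hYZ)
    have hsplit : {C ∈ F.clades | C ⊆ X ∪ Y} =
        insert (X ∪ Y) ({C ∈ F.clades | C ⊆ X} ∪ {C ∈ F.clades | C ⊆ Y}) := by
      ext E
      simp only [mem_filter, mem_insert, mem_union]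
      constructor
      · rintro ⟨hE, hEXY⟩
        by_cases hEq : E = X ∪ Y
        · exact Or.inl hEq
        · exact Or.inr ((subset_or_subset_of_ssubset_union hX hY hE
            (ssubset_of_subset_of_ne hEXY hEq)).imp (⟨hE, ·⟩) (⟨hE, ·⟩))
      · rintro (rfl | ⟨hE, hEX⟩ | ⟨hE, hEY⟩)
        · exact ⟨hZ, Subset.rfl⟩
        · exact ⟨hE, hEX.trans subset_union_left⟩
        · exact ⟨hE, hEY.trans subset_union_right⟩
    have hnotMem : X ∪ Y ∉ {C ∈ F.clades | C ⊆ X} ∪ {C ∈ F.clades | C ⊆ Y} := by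
      simp only [mem_union, mem_filter, not_or, not_and]
      exact ⟨fun _ h => hXZ (Subset.antisymm subset_union_left h),
        fun _ h => hYZ (Subset.antisymm subset_union_right h)⟩
    have hdisj : Disjoint {C ∈ F.clades | C ⊆ X} {C ∈ F.clades | C ⊆ Y} := by
      refine disjoint_filter.2 fun E hE hEX hEY => ?_
      obtain ⟨a, ha⟩ := nonempty_of_mem_clades hE
      exact disjoint_left.1 hXY (hEX ha) (hEY ha)
    rw [← hn, hsplit, card_insert_of_notMem hnotMem, card_union_of_disjoint hdisj,
      card_union_of_disjoint hXY, ← ih _ hXlt hX rfl, ← ih _ hYlt hY rfl]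
    omega
  · have hempty : {C ∈ F.clades | C ⊆ {x}} = ∅ :=
      filter_eq_empty_iff.2 fun C hC hCx => by
        have := (card_le_card hCx).trans_eq (card_singleton x)
        have := two_le_card hC
        omega
    rw [hempty, ← hn]
    simp

theorem maxClades_subset : F.maxClades ⊆ F.clades := filter_subset _ _

theorem exists_mem_maxClades_superset (hC : C ∈ F.clades) : ∃ M ∈ F.maxClades, C ⊆ M := by
  obtain ⟨M, hCM, hM⟩ := F.clades.exists_le_maximal hC
  exact ⟨M, mem_filter.2 ⟨hM.prop, fun D hD hMD => Subset.antisymm hMD (hM.2 hD hMD)⟩, hCM⟩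

theorem pairwiseDisjoint_maxClades : (F.maxClades : Set (Finset I)).PairwiseDisjoint id := by
  intro M hM N hN hMN
  simp only [maxClades, coe_filter] at hM hN
  rcases F.laminar M hM.1 N hN.1 with h | h | h
  · exact absurd (hM.2 N hN.1 h) hMN
  · exact absurd (hN.2 M hM.1 h).symm hMN
  · exact h

theorem card_supp : #F.supp = ∑ M ∈ F.maxClades, #M := by
  have hsupp : F.supp = F.maxClades.biUnion id := by
    refine Subset.antisymm (Finset.sup_le fun C hC => ?_) (biUnion_subset.2 fun M hM =>
      subset_supp (maxClades_subset hM))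
    obtain ⟨M, hM, hCM⟩ := exists_mem_maxClades_superset hC
    exact hCM.trans (subset_biUnion_of_mem id hM)
  rw [hsupp, card_biUnion pairwiseDisjoint_maxClades]
  rfl

theorem card_clades_add_card_maxClades : #F.clades + #F.maxClades = #F.supp := by
  have hclades : F.clades = F.maxClades.biUnion fun M => {C ∈ F.clades | C ⊆ M} := by
    ext C
    simp only [mem_biUnion, mem_filter]
    refine ⟨fun hC => ?_, fun ⟨_, _, hC, _⟩ => hC⟩
    obtain ⟨M, hM, hCM⟩ := exists_mem_maxClades_superset hC
    exact ⟨M, hM, hC, hCM⟩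
  have hdisj : (F.maxClades : Set (Finset I)).PairwiseDisjoint
      fun M => {C ∈ F.clades | C ⊆ M} := by
    intro M hM N hN hMN
    refine disjoint_filter.2 fun E hE hEM hEN => ?_
    obtain ⟨a, ha⟩ := nonempty_of_mem_clades hE
    exact disjoint_left.1 (pairwiseDisjoint_maxClades hM hN hMN) (hEM ha) (hEN ha)
  rw [card_supp, hclades, card_biUnion hdisj, card_eq_sum_ones F.maxClades, ← sum_add_distrib]
  refine sum_congr rfl fun M hM => ?_
  exact card_clades_subset_add_one (Or.inl (maxClades_subset hM))

def dropRoots (F : Forest I) : Forest I where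
  ground := F.ground
  clades := F.clades \ F.maxClades
  subset_ground C hC := F.subset_ground C (mem_sdiff.1 hC).1
  laminar C hC D hD := F.laminar C (mem_sdiff.1 hC).1 D (mem_sdiff.1 hD).1
  binary C hC := by
    obtain ⟨hC, hCmax⟩ := mem_sdiff.1 hC
    obtain ⟨X, Y, hX, hY, hXY, hXYC, hXC, hYC⟩ := F.binary C hC
    have hchild : ∀ {Z}, F.IsVertex Z → Z ⊆ C → Z ≠ C →
        Z ∈ F.clades \ F.maxClades ∨ ∃ x, Z = {x} := fun hZ hZC hZne =>
      hZ.imp_left fun hZ => mem_sdiff.2 ⟨hZ, fun hZmax => hZne ((mem_filter.1 hZmax).2 C hC hZC)⟩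
    exact ⟨X, Y, hchild hX (hXYC ▸ subset_union_left) hXC,
      hchild hY (hXYC ▸ subset_union_right) hYC, hXY, hXYC, hXC, hYC⟩

/-- `φ` witnesses `F' ∈ γ(F, V(F))`. -/
structure IsExpansion (φ : Finset I → Finset I) (F' F : Forest I) : Prop where
  injOn : Set.InjOn φ F'.clades
  subset_apply : ∀ C ∈ F'.clades, C ⊆ φ C
  monotoneOn : ∀ C ∈ F'.clades, ∀ D ∈ F'.clades, C ⊆ D → φ C ⊆ φ D
  image_clades : F'.clades.image φ = F.clades

namespace IsExpansion

variable {φ : Finset I → Finset I} {F' : Forest I} {M : Finset I}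

theorem apply_mem_clades (h : IsExpansion φ F' F) (hC : C ∈ F'.clades) : φ C ∈ F.clades :=
  h.image_clades ▸ mem_image_of_mem φ hC

theorem card_clades (h : IsExpansion φ F' F) : #F'.clades = #F.clades := by
  rw [← h.image_clades, card_image_of_injOn h.injOn]

theorem supp_subset (h : IsExpansion φ F' F) : F'.supp ⊆ F.supp :=
  Finset.sup_le fun C hC => (h.subset_apply C hC).trans (subset_supp (h.apply_mem_clades hC))

theorem maxClades_subset_image (h : IsExpansion φ F' F) :
    F.maxClades ⊆ F'.maxClades.image φ := by
  intro N hN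
  obtain ⟨hN, hNmax⟩ := mem_filter.1 hN
  obtain ⟨C, hC, rfl⟩ := mem_image.1 (h.image_clades ▸ hN)
  obtain ⟨M, hM, hCM⟩ := exists_mem_maxClades_superset hC
  have hφM := h.monotoneOn C hC M (maxClades_subset hM) hCM
  exact mem_image.2 ⟨M, hM, (hNmax _ (h.apply_mem_clades (maxClades_subset hM)) hφM).symm⟩

theorem card_maxClades (h : IsExpansion φ F' F) : #F'.maxClades = #F.maxClades := by
  refine le_antisymm ?_ ((card_le_card h.maxClades_subset_image).trans card_image_le)
  have := card_le_card h.supp_subset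
  have := F'.card_clades_add_card_maxClades
  have := F.card_clades_add_card_maxClades
  have := h.card_clades
  omega

theorem image_maxClades (h : IsExpansion φ F' F) : F'.maxClades.image φ = F.maxClades :=
  (eq_of_subset_of_card_le h.maxClades_subset_image
    (card_image_le.trans h.card_maxClades.le)).symm

/-- The root clades of `F'` are sent onto those of `F` and can only grow, while the two supports
have the same size; so none grows. -/
theorem apply_eq_of_mem_maxClades (h : IsExpansion φ F' F) (hM : M ∈ F'.maxClades) :
    φ M = M := by
  have hle : ∀ M ∈ F'.maxClades, #M ≤ #(φ M) := fun M hM =>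
    card_le_card (h.subset_apply M (maxClades_subset hM))
  have hsum : ∑ M ∈ F'.maxClades, #M = ∑ M ∈ F'.maxClades, #(φ M) := by
    rw [← card_supp, ← sum_image (h.injOn.mono (coe_subset.2 maxClades_subset)), h.image_maxClades,
      ← card_supp]
    have := F'.card_clades_add_card_maxClades
    have := F.card_clades_add_card_maxClades
    have := h.card_clades
    have := h.card_maxClades
    omega
  have hcard := (sum_eq_sum_iff_of_le hle).1 hsum M hM
  exact (eq_of_subset_of_card_le (h.subset_apply M (maxClades_subset hM)) hcard.ge).symm

theorem dropRoots (h : IsExpansion φ F' F) : IsExpansion φ F'.dropRoots F.dropRoots where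
  injOn := h.injOn.mono (coe_subset.2 sdiff_subset)
  subset_apply C hC := h.subset_apply C (mem_sdiff.1 hC).1
  monotoneOn C hC D hD := h.monotoneOn C (mem_sdiff.1 hC).1 D (mem_sdiff.1 hD).1
  image_clades := by
    rw [Forest.dropRoots, Forest.dropRoots, image_sdiff_of_injOn h.injOn maxClades_subset,
      h.image_clades, h.image_maxClades]

/-- Rigidity: `γ(F, V(F))` contains only `F`, with the identity as the only witness. -/
theorem apply_eq (h : IsExpansion φ F' F) (hC : C ∈ F'.clades) : φ C = C := by
  induction hn : #F'.clades using Nat.strong_induction_on generalizing F' F with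
  | _ n ih =>
  by_cases hCmax : C ∈ F'.maxClades
  · exact h.apply_eq_of_mem_maxClades hCmax
  · obtain ⟨M, hM, -⟩ := exists_mem_maxClades_superset hC
    have hlt : #F'.dropRoots.clades < n :=
      hn ▸ card_lt_card (sdiff_ssubset maxClades_subset ⟨M, hM⟩)
    exact ih _ hlt h.dropRoots (mem_sdiff.2 ⟨hC, hCmax⟩) rfl

end IsExpansion

theorem ext {F G : Forest I} (hground : F.ground = G.ground) (hclades : F.clades = G.clades) :
    F = G := by
  cases F
  cases G
  cases hground
  cases hclades
  rfl

section Merge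

variable {F1 F2 : Forest I} {D : Finset I}

theorem disjoint_of_disjoint_supp (hd : Disjoint F1.supp F2.supp) (hC : C ∈ F1.clades)
    (hD : D ∈ F2.clades) : Disjoint C D :=
  hd.mono (subset_supp hC) (subset_supp hD)

theorem not_subset_of_disjoint_supp (hd : Disjoint F1.supp F2.supp) (hC : C ∈ F1.clades)
    (hD : D ∈ F2.clades) : ¬C ⊆ D := fun hCD =>
  (nonempty_of_mem_clades hC).ne_empty
    (disjoint_self.1 ((disjoint_of_disjoint_supp hd hC hD).mono_right hCD))

theorem disjoint_clades_of_disjoint_supp (hd : Disjoint F1.supp F2.supp) :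
    Disjoint F1.clades F2.clades :=
  disjoint_left.2 fun _ hC1 hC2 => not_subset_of_disjoint_supp hd hC1 hC2 Subset.rfl

def merge (F1 F2 : Forest I) (hg : F1.ground = F2.ground) (hd : Disjoint F1.supp F2.supp) :
    Forest I where
  ground := F1.ground
  clades := F1.clades ∪ F2.clades
  subset_ground C hC := (mem_union.1 hC).elim (F1.subset_ground C) (hg ▸ F2.subset_ground C)
  laminar C hC D hD := by
    rcases mem_union.1 hC with hC | hC <;> rcases mem_union.1 hD with hD | hD
    · exact F1.laminar C hC D hD
    · exact Or.inr (Or.inr (disjoint_of_disjoint_supp hd hC hD))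
    · exact Or.inr (Or.inr (disjoint_of_disjoint_supp hd hD hC).symm)
    · exact F2.laminar C hC D hD
  binary C hC := by
    have hvertex : ∀ {F : Forest I}, F.clades ⊆ F1.clades ∪ F2.clades → ∀ {Z}, F.IsVertex Z →
        Z ∈ F1.clades ∪ F2.clades ∨ ∃ x, Z = {x} := fun hF _ hZ => hZ.imp_left (hF ·)
    rcases mem_union.1 hC with hC | hC
    · obtain ⟨X, Y, hX, hY, h⟩ := F1.binary C hC
      exact ⟨X, Y, hvertex subset_union_left hX, hvertex subset_union_left hY, h⟩
    · obtain ⟨X, Y, hX, hY, h⟩ := F2.binary C hC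
      exact ⟨X, Y, hvertex subset_union_right hX, hvertex subset_union_right hY, h⟩

variable (hg : F1.ground = F2.ground) (hd : Disjoint F1.supp F2.supp)

theorem supp_merge : (merge F1 F2 hg hd).supp = F1.supp ∪ F2.supp :=
  sup_union

theorem mem_gamma_merge_left : F1 ∈ (merge F1 F2 hg hd).gamma F1.clades :=
  ⟨rfl, id, Set.injOn_id _, fun _ hC => mem_union_left _ hC, fun _ _ => Subset.rfl,
    fun _ _ _ _ h => h, image_id⟩

theorem mem_gamma_merge_right : F2 ∈ (merge F1 F2 hg hd).gamma F2.clades :=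
  ⟨hg.symm, id, Set.injOn_id _, fun _ hC => mem_union_right _ hC, fun _ _ => Subset.rfl,
    fun _ _ _ _ h => h, image_id⟩

/-- Gluing the witnesses of `F1 ∈ γ(F, V1)` and `F2 ∈ γ(F, V2)`. -/
theorem exists_isExpansion_merge {F : Forest I} {V1 V2 : Finset (Finset I)}
    (hV : V1 ∪ V2 = F.clades) (hV12 : Disjoint V1 V2)
    (h1 : F1 ∈ F.gamma V1) (h2 : F2 ∈ F.gamma V2) :
    ∃ φ, IsExpansion φ (merge F1 F2 hg hd) F ∧
      F1.clades.image φ = V1 ∧ F2.clades.image φ = V2 := by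
  obtain ⟨-, φ1, hinj1, -, hsub1, hmono1, himg1⟩ := h1
  obtain ⟨-, φ2, hinj2, -, hsub2, hmono2, himg2⟩ := h2
  set φ := fun C => if C ∈ F1.clades then φ1 C else φ2 C
  have hφ1 : Set.EqOn φ φ1 F1.clades := fun C hC => if_pos hC
  have hφ2 : Set.EqOn φ φ2 F2.clades := fun C hC =>
    if_neg (disjoint_right.1 (disjoint_clades_of_disjoint_supp hd) hC)
  have himg1' : F1.clades.image φ = V1 := by rw [image_congr hφ1, himg1]
  have himg2' : F2.clades.image φ = V2 := by rw [image_congr hφ2, himg2]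
  refine ⟨φ, ⟨?_, ?_, ?_, ?_⟩, himg1', himg2'⟩
  · rw [merge, coe_union]
    refine (Set.injOn_union (disjoint_coe.2 (disjoint_clades_of_disjoint_supp hd))).2
      ⟨hinj1.congr hφ1.symm, hinj2.congr hφ2.symm, fun C hC D hD hCD => ?_⟩
    exact disjoint_left.1 hV12 (himg1' ▸ mem_image_of_mem φ hC)
      (hCD ▸ himg2' ▸ mem_image_of_mem φ hD)
  · intro C hC
    rcases mem_union.1 hC with hC | hC
    · exact hφ1 hC ▸ hsub1 C hC
    · exact hφ2 hC ▸ hsub2 C hC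
  · intro C hC D hD hCD
    rcases mem_union.1 hC with hC | hC <;> rcases mem_union.1 hD with hD | hD
    · exact hφ1 hC ▸ hφ1 hD ▸ hmono1 C hC D hD hCD
    · exact absurd hCD (not_subset_of_disjoint_supp hd hC hD)
    · exact absurd hCD (not_subset_of_disjoint_supp hd.symm hC hD)
    · exact hφ2 hC ▸ hφ2 hD ▸ hmono2 C hC D hD hCD
  · exact (image_union _ _).trans (himg1' ▸ himg2' ▸ hV)

theorem eq_merge_of_mem_gamma {F : Forest I} {V1 V2 : Finset (Finset I)}
    (hV : V1 ∪ V2 = F.clades) (hV12 : Disjoint V1 V2)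
    (h1 : F1 ∈ F.gamma V1) (h2 : F2 ∈ F.gamma V2) :
    F = merge F1 F2 hg hd ∧ V1 = F1.clades ∧ V2 = F2.clades := by
  obtain ⟨φ, hφ, himg1, himg2⟩ := exists_isExpansion_merge hg hd hV hV12 h1 h2
  have hid : ∀ S ⊆ (merge F1 F2 hg hd).clades, S.image φ = S := fun S hS => by
    rw [image_congr fun C hC => hφ.apply_eq (hS hC), image_id']
  refine ⟨ext h1.1.symm ?_, ?_, ?_⟩
  · rw [← hφ.image_clades, hid _ Subset.rfl]
  · rw [← himg1, hid _ subset_union_left]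
  · rw [← himg2, hid _ subset_union_right]

end Merge

end Forest

/-- if `F1`, `F2` are forests on `I` with disjoint supports, there
is exactly one pair `(F, V1 ⊔ V2 = V(F))` with `F1 ∈ γ(F,V1)` and
`F2 ∈ γ(F,V2)`; moreover for this pair `Supp(F) = Supp(F1) ⊔ Supp(F2)` and `F`
coincides with `F1` and `F2` on their supports (its clades are exactly those of
`F1` together with those of `F2`). -/
theorem stmt_13 (I : Type*) [Fintype I] [DecidableEq I] (F1 F2 : Forest I)
    (hg1 : F1.ground = Finset.univ) (hg2 : F2.ground = Finset.univ)
    (hd : Disjoint F1.supp F2.supp) :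
    (∃! p : Forest I × Finset (Finset I) × Finset (Finset I),
        p.2.1 ∪ p.2.2 = p.1.clades ∧ Disjoint p.2.1 p.2.2 ∧
        F1 ∈ Forest.gamma p.1 p.2.1 ∧ F2 ∈ Forest.gamma p.1 p.2.2) ∧
    (∀ p : Forest I × Finset (Finset I) × Finset (Finset I),
        p.2.1 ∪ p.2.2 = p.1.clades → Disjoint p.2.1 p.2.2 →
        F1 ∈ Forest.gamma p.1 p.2.1 → F2 ∈ Forest.gamma p.1 p.2.2 →
        p.1.supp = F1.supp ∪ F2.supp ∧ p.1.clades = F1.clades ∪ F2.clades) := by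
  have hg : F1.ground = F2.ground := hg1.trans hg2.symm
  refine ⟨⟨(Forest.merge F1 F2 hg hd, F1.clades, F2.clades),
    ⟨rfl, Forest.disjoint_clades_of_disjoint_supp hd, Forest.mem_gamma_merge_left hg hd,
      Forest.mem_gamma_merge_right hg hd⟩, ?_⟩, ?_⟩
  · rintro ⟨F, V1, V2⟩ ⟨hV, hV12, h1, h2⟩
    obtain ⟨rfl, rfl, rfl⟩ := Forest.eq_merge_of_mem_gamma hg hd hV hV12 h1 h2
    rfl
  · rintro ⟨F, V1, V2⟩ hV hV12 h1 h2
    obtain ⟨rfl, -, -⟩ := Forest.eq_merge_of_mem_gamma hg hd hV hV12 h1 h2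
    exact ⟨Forest.supp_merge hg hd, rfl⟩
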